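/- Let ẋ = f(x) be forward complete and globally asymptotically stable to 0, and let φ⁰ : ℝⁿ → ℝⁿ be C¹ satisfying Dφ⁰(x)f(x) = Aφ⁰(x) with A Hurwitz, such that φ⁰ is injective with invertible Jacobian on a ball B_ε(0). Suppose for every x there is t_x ≥ 0 with X(x,t) ∈ B_ε(0) for all t ≥ t_x. Define φ(x) := e^{−A t_x} φ⁰(X(x,t_x)). Then φ is well-defined (independent of the choice of admissible t_x), satisfies Dφ(x)f(x) = Aφ(x) wherever differentiable, agrees with φ⁰ on B_ε(0), and has invertible Jacobian at every x. -/

import Mathlib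

/-! Since `φ⁰` satisfies the PDE everywhere, `t ↦ e^{-tA} φ⁰(X(x,t))` has zero derivative, so
`φ⁰(X(x,t)) = e^{tA} φ⁰(x)` for `t ≥ 0` and `φ = φ⁰`; this gives the first three claims at once.
For the Jacobian at `x`, put `t = t_x`. Grönwall's inequality, run forwards and backwards in time,
makes the time-`t` flow map locally bi-Lipschitz at `x`; `φ⁰` is locally anti-Lipschitz at
`X(x,t) ∈ B_ε(0)` because its Jacobian there is invertible; and `e^{tA}` is bounded. Together,
`|x' - x| = O(|φ⁰(x') - φ⁰(x)|)` near `x`, which rules out a kernel of `Dφ⁰(x)`. -/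

open Matrix MeasureTheory

/-- Jacobian matrix of a map between finite-dimensional spaces. -/
noncomputable def jac {n N : ℕ} (φ : (Fin n → ℝ) → (Fin N → ℝ)) (x : Fin n → ℝ) :
    Matrix (Fin N) (Fin n) ℝ :=
  Matrix.of fun i j => fderiv ℝ φ x (Pi.single j 1) i

/-- A real square matrix is Hurwitz if all its (complex) eigenvalues have
negative real part. -/
def Hurwitz {N : ℕ} (A : Matrix (Fin N) (Fin N) ℝ) : Prop :=
  ∀ μ ∈ spectrum ℂ (A.map (Complex.ofReal ·)), μ.re < 0

/-- Euclidean norm on `Fin n → ℝ`. -/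
noncomputable def euclNorm {n : ℕ} (x : Fin n → ℝ) : ℝ :=
  Real.sqrt (∑ i, x i ^ 2)

open NormedSpace Set Filter Topology Asymptotics Metric
open scoped NNReal

theorem jac_eq_toMatrix' {n N : ℕ} (φ : (Fin n → ℝ) → (Fin N → ℝ)) (x : Fin n → ℝ) :
    jac φ x = LinearMap.toMatrix' (fderiv ℝ φ x : (Fin n → ℝ) →ₗ[ℝ] Fin N → ℝ) := by
  ext i j
  simp [jac, LinearMap.toMatrix'_apply]

theorem jac_mulVec {n N : ℕ} (φ : (Fin n → ℝ) → (Fin N → ℝ)) (x v : Fin n → ℝ) :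
    jac φ x *ᵥ v = fderiv ℝ φ x v := by
  rw [jac_eq_toMatrix', LinearMap.toMatrix'_mulVec]
  rfl

theorem isUnit_det_jac_iff {n : ℕ} (φ : (Fin n → ℝ) → (Fin n → ℝ)) (x : Fin n → ℝ) :
    IsUnit (jac φ x).det ↔ Function.Injective (fderiv ℝ φ x) := by
  rw [jac_eq_toMatrix', LinearMap.det_toMatrix', ← LinearMap.isUnit_iff_isUnit_det,
    LinearMap.isUnit_iff_ker_eq_bot, LinearMap.ker_eq_bot]
  rfl

theorem Matrix.exp_mulVec {ι : Type*} [Fintype ι] [DecidableEq ι] (M : Matrix ι ι ℝ) (v : ι → ℝ) :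
    exp M *ᵥ v = exp (LinearMap.toContinuousLinearMap (Matrix.toLin' M)) v := by
  -- `exp` does not depend on the norm; a submultiplicative norm is only needed to apply
  -- `map_exp_of_mem_ball`.
  let _ : NormedRing (Matrix ι ι ℝ) := Matrix.linftyOpNormedRing
  let _ : NormedAlgebra ℝ (Matrix ι ι ℝ) := Matrix.linftyOpNormedAlgebra
  let Φ := Matrix.toLinAlgEquiv'.trans (Module.End.toContinuousLinearMap (ι → ℝ))
  have hΦ : Continuous Φ := LinearMap.continuous_of_finiteDimensional Φ.toLinearMap
  exact congrArg (· v) (map_exp_of_mem_ball (𝕂 := ℝ) Φ hΦ M (by simp [expSeries_radius_eq_top]))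

section Koopman

variable {E F : Type*} [NormedAddCommGroup E] [NormedSpace ℝ E]
  [NormedAddCommGroup F] [NormedSpace ℝ F] [CompleteSpace F]
  {v : E → E} {ψ : E → F} {L : F →L[ℝ] F} {γ : ℝ → E}

theorem exp_neg_smul_apply_trajectory_eq (hψ : Differentiable ℝ ψ)
    (hpde : ∀ z, fderiv ℝ ψ z (v z) = L (ψ z))
    (hγ : ∀ t, 0 ≤ t → HasDerivAt γ (v (γ t)) t) {t : ℝ} (ht : 0 ≤ t) :
    exp ((-t) • L) (ψ (γ t)) = ψ (γ 0) := by
  have hderiv : ∀ s, 0 ≤ s → HasDerivAt (fun s : ℝ => exp (s • -L) (ψ (γ s))) 0 s := by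
    intro s hs
    have := (hasDerivAt_exp_smul_const (-L) s).clm_apply
      ((hψ (γ s)).hasFDerivAt.comp_hasDerivAt s (hγ s hs))
    simpa [hpde] using this
  have hconst := constant_of_has_deriv_right_zero (a := 0) (b := t)
    (fun s hs => (hderiv s hs.1).continuousAt.continuousWithinAt)
    (fun s hs => (hderiv s hs.1).hasDerivWithinAt) t ⟨ht, le_rfl⟩
  simpa [neg_smul, smul_neg] using hconst

theorem trajectory_eq_exp_smul_apply (hψ : Differentiable ℝ ψ)
    (hpde : ∀ z, fderiv ℝ ψ z (v z) = L (ψ z))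
    (hγ : ∀ t, 0 ≤ t → HasDerivAt γ (v (γ t)) t) {t : ℝ} (ht : 0 ≤ t) :
    ψ (γ t) = exp (t • L) (ψ (γ 0)) := by
  have hinv : exp (t • L) * exp ((-t) • L) = 1 := by
    rw [← exp_add_of_commute_of_mem_ball (𝕂 := ℝ) ((Commute.refl L).smul_left t |>.smul_right (-t))
      (by simp [expSeries_radius_eq_top]) (by simp [expSeries_radius_eq_top])]
    simp
  rw [← exp_neg_smul_apply_trajectory_eq hψ hpde hγ ht]
  exact (congrArg (· (ψ (γ t))) hinv).symm

end Koopman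

theorem forall_mem_Icc_lt_of_continuousOn {D : ℝ → ℝ} {a b c : ℝ} (hD : ContinuousOn D (Icc a b))
    (hstep : ∀ r ∈ Icc a b, (∀ u ∈ Ico a r, D u < c) → D r < c) : ∀ r ∈ Icc a b, D r < c := by
  by_contra! hbad
  set B := Icc a b ∩ D ⁻¹' Ici c
  have hB : IsClosed B := hD.preimage_isClosed_of_isClosed isClosed_Icc isClosed_Ici
  have hBne : B.Nonempty := let ⟨r, hr, hDr⟩ := hbad; ⟨r, hr, hDr⟩
  have hBbdd : BddBelow B := ⟨a, fun u hu => hu.1.1⟩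
  obtain ⟨hr₀, hDr₀⟩ := hB.csInf_mem hBne hBbdd
  refine (hstep _ hr₀ fun u hu => ?_).not_ge hDr₀
  by_contra! hDu
  exact hu.2.not_ge (csInf_le hBbdd ⟨⟨hu.1, hu.2.le.trans hr₀.2⟩, hDu⟩)

section Gronwall

variable {E : Type*} [NormedAddCommGroup E] [NormedSpace ℝ E]

theorem exists_forall_dist_le_of_trajectories [ProperSpace E] {v : E → E} (hv : LocallyLipschitz v)
    {γ : ℝ → E} {T : ℝ} (hγ : ContinuousOn γ (Icc 0 T))
    (hγ' : ∀ r ∈ Ico 0 T, HasDerivWithinAt γ (v (γ r)) (Ici r) r) :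
    ∃ K : ℝ≥0, ∃ δ > 0, ∀ η : ℝ → E, ContinuousOn η (Icc 0 T) →
      (∀ r ∈ Ico 0 T, HasDerivWithinAt η (v (η r)) (Ici r) r) → dist (η 0) (γ 0) < δ →
      ∀ r ∈ Icc 0 T, dist (η r) (γ r) ≤ dist (η 0) (γ 0) * Real.exp (K * r) := by
  set N := cthickening 1 (γ '' Icc 0 T)
  obtain ⟨K, hK⟩ : ∃ K, LipschitzOnWith K v N :=
    hv.locallyLipschitzOn.exists_lipschitzOnWith_of_compact
      (isCompact_Icc.image_of_continuousOn hγ).cthickening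
  -- `δ` is small enough for the Grönwall bound to keep `η` in `N`, where `v` is Lipschitz.
  refine ⟨K, Real.exp (-(K * T)), Real.exp_pos _, fun η hη hη' hδ => ?_⟩
  have hmem : ∀ u ∈ Icc 0 T, dist (η u) (γ u) ≤ 1 → η u ∈ N := fun u hu hdist =>
    mem_cthickening_of_dist_le _ _ _ _ (mem_image_of_mem γ hu) hdist
  have hgronwall : ∀ r ∈ Icc 0 T, (∀ u ∈ Ico 0 r, η u ∈ N) →
      dist (η r) (γ r) ≤ dist (η 0) (γ 0) * Real.exp (K * r) := fun r hr htube => by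
    have hsub : Icc 0 r ⊆ Icc 0 T := Icc_subset_Icc_right hr.2
    have hsub' : Ico 0 r ⊆ Ico 0 T := Ico_subset_Ico_right hr.2
    simpa using dist_le_of_trajectories_ODE_of_mem (v := fun _ => v) (s := fun _ => N)
      (fun _ _ => hK) (hη.mono hsub) (fun u hu => hη' u (hsub' hu)) htube
      (hγ.mono hsub) (fun u hu => hγ' u (hsub' hu))
      (fun u hu => self_subset_cthickening _ (mem_image_of_mem γ (hsub (Ico_subset_Icc_self hu))))
      le_rfl r ⟨hr.1, le_rfl⟩
  have hsmall : ∀ r ∈ Icc 0 T, dist (η 0) (γ 0) * Real.exp (K * r) < 1 := fun r hr => by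
    calc dist (η 0) (γ 0) * Real.exp (K * r)
        ≤ dist (η 0) (γ 0) * Real.exp (K * T) := by gcongr; exact hr.2
      _ < Real.exp (-(K * T)) * Real.exp (K * T) := by gcongr
      _ = 1 := by rw [← Real.exp_add, neg_add_cancel, Real.exp_zero]
  have hclose : ∀ r ∈ Icc 0 T, dist (η r) (γ r) < 1 :=
    forall_mem_Icc_lt_of_continuousOn (continuous_dist.comp_continuousOn (hη.prodMk hγ))
      fun r hr hlt => (hgronwall r hr fun u hu =>
        hmem u ⟨hu.1, hu.2.le.trans hr.2⟩ (hlt u hu).le).trans_lt (hsmall r hr)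
  exact fun r hr => hgronwall r hr fun u hu =>
    hmem u ⟨hu.1, hu.2.le.trans hr.2⟩ (hclose u ⟨hu.1, hu.2.le.trans hr.2⟩).le

end Gronwall

section Flow

variable {E : Type*} [NormedAddCommGroup E] [NormedSpace ℝ E] [ProperSpace E]
  {f : E → E} {X : E → ℝ → E} {t : ℝ}

theorem isBigO_flow_sub (hf : LocallyLipschitz f) (hX0 : ∀ x, X x 0 = x)
    (hXode : ∀ x t, 0 ≤ t → HasDerivAt (X x) (f (X x t)) t) (x : E) (ht : 0 ≤ t) :
    (fun x' => X x' t - X x t) =O[𝓝 x] fun x' => x' - x := by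
  obtain ⟨K, δ, hδ, hK⟩ := exists_forall_dist_le_of_trajectories hf (T := t)
    (fun r hr => (hXode x r hr.1).continuousAt.continuousWithinAt)
    (fun r hr => (hXode x r hr.1).hasDerivWithinAt)
  refine IsBigO.of_bound (Real.exp (K * t)) ?_
  filter_upwards [ball_mem_nhds x hδ] with x' hx'
  have := hK (X x') (fun r hr => (hXode x' r hr.1).continuousAt.continuousWithinAt)
    (fun r hr => (hXode x' r hr.1).hasDerivWithinAt) (by rwa [hX0, hX0]) t ⟨ht, le_rfl⟩
  rw [hX0, hX0, dist_eq_norm, dist_eq_norm] at this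
  linarith

theorem continuousAt_flow (hf : LocallyLipschitz f) (hX0 : ∀ x, X x 0 = x)
    (hXode : ∀ x t, 0 ≤ t → HasDerivAt (X x) (f (X x t)) t) (x : E) (ht : 0 ≤ t) :
    ContinuousAt (fun x' => X x' t) x := by
  have := (isBigO_flow_sub hf hX0 hXode x ht).trans_tendsto
    (tendsto_sub_nhds_zero_iff.mpr tendsto_id)
  exact tendsto_sub_nhds_zero_iff.mp this

theorem isBigO_sub_flow (hf : LocallyLipschitz f) (hX0 : ∀ x, X x 0 = x)
    (hXode : ∀ x t, 0 ≤ t → HasDerivAt (X x) (f (X x t)) t) (x : E) (ht : 0 ≤ t) :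
    (fun x' => x' - x) =O[𝓝 x] fun x' => X x' t - X x t := by
  have hrev : ∀ y, ∀ r ≤ t, HasDerivAt (fun r => X y (t - r)) (-f (X y (t - r))) r := by
    intro y r hr
    simpa [Function.comp_def] using
      (hXode y (t - r) (sub_nonneg.mpr hr)).scomp r ((hasDerivAt_id r).const_sub t)
  obtain ⟨K, δ, hδ, hK⟩ := exists_forall_dist_le_of_trajectories hf.neg (T := t)
    (fun r hr => (hrev x r hr.2).continuousAt.continuousWithinAt)
    (fun r hr => (hrev x r hr.2.le).hasDerivWithinAt)
  refine IsBigO.of_bound (Real.exp (K * t)) ?_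
  filter_upwards [continuousAt_flow hf hX0 hXode x ht (ball_mem_nhds _ hδ)] with x' hx'
  have := hK _ (fun r hr => (hrev x' r hr.2).continuousAt.continuousWithinAt)
    (fun r hr => (hrev x' r hr.2.le).hasDerivWithinAt) (by simpa using hx') t ⟨ht, le_rfl⟩
  simp only [sub_self, hX0, sub_zero, dist_eq_norm] at this
  linarith

end Flow

section Immersion

variable {E F : Type*} [NormedAddCommGroup E] [NormedSpace ℝ E]
  [NormedAddCommGroup F] [NormedSpace ℝ F] {ψ : E → F} {ψ' : E →L[ℝ] F} {x : E}

theorem HasFDerivAt.isBigO_sub_rev [FiniteDimensional ℝ E] (hψ : HasFDerivAt ψ ψ' x)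
    (hψ' : Function.Injective ψ') :
    (fun x' => x' - x) =O[𝓝 x] fun x' => ψ x' - ψ x := by
  obtain ⟨K, -, hK⟩ := (ψ' : E →ₗ[ℝ] F).injective_iff_antilipschitz.mp hψ'
  have hlin : (fun x' => x' - x) =O[𝓝 x] fun x' => ψ' (x' - x) :=
    IsBigO.of_bound K (Eventually.of_forall fun x' => hK.le_mul_norm (map_zero _) (x' - x))
  have hrem := (hψ.isLittleO.trans_isBigO hlin).right_isBigO_add
  exact hlin.trans (hrem.congr_right fun x' => by abel)

theorem HasFDerivAt.injective_of_isBigO_sub_rev (hψ : HasFDerivAt ψ ψ' x)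
    (hrev : (fun x' => x' - x) =O[𝓝 x] fun x' => ψ x' - ψ x) : Function.Injective ψ' := by
  rw [injective_iff_map_eq_zero]
  intro w hw
  by_contra hw0
  have hline : Tendsto (fun s : ℝ => x + s • w) (𝓝[≠] 0) (𝓝 x) := by
    have hc : Continuous fun s : ℝ => x + s • w := by fun_prop
    exact tendsto_nhdsWithin_of_tendsto_nhds (hc.tendsto' 0 x (by simp))
  have hO : (fun s : ℝ => s • w) =O[𝓝[≠] 0] fun s => ψ (x + s • w) - ψ x := by
    simpa [Function.comp_def] using hrev.comp_tendsto hline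
  have ho : (fun s : ℝ => ψ (x + s • w) - ψ x) =o[𝓝[≠] 0] fun s => s • w := by
    simpa [Function.comp_def, hw] using hψ.isLittleO.comp_tendsto hline
  refine isLittleO_irrefl (Eventually.frequently ?_) (hO.trans_isLittleO ho)
  filter_upwards [self_mem_nhdsWithin] with s (hs : s ≠ 0)
  exact smul_ne_zero hs hw0

theorem injective_fderiv_of_semiconj [FiniteDimensional ℝ E] {g : E → E} {Λ : F →L[ℝ] F}
    (hsc : Function.Semiconj ψ g Λ) (hψ : DifferentiableAt ℝ ψ x)
    (hψg : DifferentiableAt ℝ ψ (g x)) (hinj : Function.Injective (fderiv ℝ ψ (g x)))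
    (hg : ContinuousAt g x) (hg_rev : (fun x' => x' - x) =O[𝓝 x] fun x' => g x' - g x) :
    Function.Injective (fderiv ℝ ψ x) := by
  refine hψ.hasFDerivAt.injective_of_isBigO_sub_rev ?_
  calc (fun x' => x' - x) =O[𝓝 x] fun x' => g x' - g x := hg_rev
    _ =O[𝓝 x] fun x' => ψ (g x') - ψ (g x) :=
      (hψg.hasFDerivAt.isBigO_sub_rev hinj).comp_tendsto hg
    _ = fun x' => Λ (ψ x' - ψ x) := by simp only [hsc.eq, map_sub]
    _ =O[𝓝 x] fun x' => ψ x' - ψ x := Λ.isBigO_comp _ _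

end Immersion

open NormedSpace in
theorem koopman_mapping_redesign_general
    {n : ℕ}
    (f : (Fin n → ℝ) → (Fin n → ℝ)) (hf : ContDiff ℝ 1 f)
    (X : (Fin n → ℝ) → ℝ → (Fin n → ℝ))
    (hX0 : ∀ x, X x 0 = x)
    (hXode : ∀ x t, 0 ≤ t → HasDerivAt (X x) (f (X x t)) t)
    (A : Matrix (Fin n) (Fin n) ℝ)
    (φ0 : (Fin n → ℝ) → (Fin n → ℝ)) (hφ0 : ContDiff ℝ 1 φ0)
    (hPDE0 : ∀ x, (jac φ0 x).mulVec (f x) = A.mulVec (φ0 x))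
    (ε : ℝ)
    (hjac0 : ∀ x ∈ Metric.ball (0 : Fin n → ℝ) ε, IsUnit (jac φ0 x).det)
    (tx : (Fin n → ℝ) → ℝ)
    (htx : ∀ x, 0 ≤ tx x ∧ ∀ t ≥ tx x, X x t ∈ Metric.ball (0 : Fin n → ℝ) ε)
    (φ : (Fin n → ℝ) → (Fin n → ℝ))
    (hφ : ∀ x, φ x = (exp ((-(tx x)) • A)).mulVec (φ0 (X x (tx x)))) :
    (∀ x t₁ t₂, tx x ≤ t₁ → t₁ ≤ t₂ →
      (exp ((-t₁) • A)).mulVec (φ0 (X x t₁)) =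
        (exp ((-t₂) • A)).mulVec (φ0 (X x t₂))) ∧
    (∀ x ∈ Metric.ball (0 : Fin n → ℝ) ε, φ x = φ0 x) ∧
    (∀ x, DifferentiableAt ℝ φ x → (jac φ x).mulVec (f x) = A.mulVec (φ x)) ∧
    (∀ x, IsUnit (jac φ x).det) := by
  set L := LinearMap.toContinuousLinearMap (Matrix.toLin' A)
  have hφ0d : Differentiable ℝ φ0 := hφ0.differentiable one_ne_zero
  have hpde : ∀ z, fderiv ℝ φ0 z (f z) = L (φ0 z) := fun z => by
    rw [← jac_mulVec, hPDE0]
    rfl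
  have hkoopman : ∀ x t, 0 ≤ t → exp ((-t) • A) *ᵥ φ0 (X x t) = φ0 x := fun x t ht => by
    rw [Matrix.exp_mulVec, map_smul, map_smul, exp_neg_smul_apply_trajectory_eq hφ0d hpde
      (hXode x) ht, hX0]
  have hφeq : φ = φ0 := funext fun x => (hφ x).trans (hkoopman x _ (htx x).1)
  refine ⟨fun x t₁ t₂ h₁ h₂ => ?_, fun x _ => by rw [hφeq],
    fun x _ => by rw [hφeq]; exact hPDE0 x, fun x => ?_⟩
  · have ht₁ := (htx x).1.trans h₁
    rw [hkoopman x t₁ ht₁, hkoopman x t₂ (ht₁.trans h₂)]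
  obtain ⟨ht, hball⟩ := htx x
  have hf_lip : LocallyLipschitz f := hf.locallyLipschitz
  rw [hφeq, isUnit_det_jac_iff]
  refine injective_fderiv_of_semiconj (Λ := exp (tx x • L)) (fun x' => ?_) (hφ0d x) (hφ0d _)
    ((isUnit_det_jac_iff _ _).mp (hjac0 _ (hball _ le_rfl)))
    (continuousAt_flow hf_lip hX0 hXode x ht) (isBigO_sub_flow hf_lip hX0 hXode x ht)
  simpa [hX0] using trajectory_eq_exp_smul_apply hφ0d hpde (hXode x') ht

open NormedSpace in
/-- redesign of a locally injective Koopman mapping into a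
globally immersive one via `φ(x) = e^{-A t_x} φ⁰(X(x,t_x))`. -/
theorem koopman_mapping_redesign
    {n : ℕ}
    (f : (Fin n → ℝ) → (Fin n → ℝ)) (hf : ContDiff ℝ 1 f)
    (X : (Fin n → ℝ) → ℝ → (Fin n → ℝ))
    (hX0 : ∀ x, X x 0 = x)
    (hXode : ∀ x t, 0 ≤ t → HasDerivAt (X x) (f (X x t)) t)
    (hGAS : ∀ x, Filter.Tendsto (X x) Filter.atTop (nhds 0))
    (A : Matrix (Fin n) (Fin n) ℝ) (hA : Hurwitz A)
    (φ0 : (Fin n → ℝ) → (Fin n → ℝ)) (hφ0 : ContDiff ℝ 1 φ0)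
    (hPDE0 : ∀ x, (jac φ0 x).mulVec (f x) = A.mulVec (φ0 x))
    (ε : ℝ) (hε : 0 < ε)
    (hinj : Set.InjOn φ0 (Metric.ball (0 : Fin n → ℝ) ε))
    (hjac0 : ∀ x ∈ Metric.ball (0 : Fin n → ℝ) ε, IsUnit (jac φ0 x).det)
    (tx : (Fin n → ℝ) → ℝ)
    (htx : ∀ x, 0 ≤ tx x ∧ ∀ t ≥ tx x, X x t ∈ Metric.ball (0 : Fin n → ℝ) ε)
    (φ : (Fin n → ℝ) → (Fin n → ℝ))
    (hφ : ∀ x, φ x = (exp ((-(tx x)) • A)).mulVec (φ0 (X x (tx x)))) :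
    (∀ x t₁ t₂, tx x ≤ t₁ → t₁ ≤ t₂ →
      (exp ((-t₁) • A)).mulVec (φ0 (X x t₁)) =
        (exp ((-t₂) • A)).mulVec (φ0 (X x t₂))) ∧
    (∀ x ∈ Metric.ball (0 : Fin n → ℝ) ε, φ x = φ0 x) ∧
    (∀ x, DifferentiableAt ℝ φ x → (jac φ x).mulVec (f x) = A.mulVec (φ x)) ∧
    (∀ x, IsUnit (jac φ x).det) :=
  koopman_mapping_redesign_general f hf X hX0 hXode A φ0 hφ0 hPDE0 ε hjac0 tx htx φ hφ
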